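/- arXiv:2204.12259 — 4 statements merged into one kernel-verified Lean document; each statement's English description precedes it below -/
import Mathlib

section
/- Let V, q ∈ ℤ[t]. Suppose that V(1) = q(1), V′(1) = q′(1) (formal derivatives evaluated at 1), and that the evaluations of V and q in ℂ agree at ζ₃, at i, and at ζ₆. Then f(t) = t⁸ − 2t⁷ + 3t⁶ − 4t⁵ + 4t⁴ − 4t³ + 3t² − 2t + 1 divides V − q in ℤ[t]. -/
open Polynomial Complex

private lemma bez {R : Type*} [CommSemiring R] {a b u v w : R} (h : u * a + v * b = w)
    (hw : IsUnit w) : IsCoprime a b := by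
  obtain ⟨w', rfl⟩ := hw
  exact ⟨↑w'⁻¹ * u, ↑w'⁻¹ * v, by
    rw [mul_assoc, mul_assoc, ← mul_add, h, Units.inv_mul]⟩

theorem stmt_2 (V q : ℤ[X])
    (h1 : V.eval 1 = q.eval 1)
    (h2 : (derivative V).eval 1 = (derivative q).eval 1)
    (h3 : aeval (Complex.exp (2 * Real.pi * Complex.I / 3)) V =
          aeval (Complex.exp (2 * Real.pi * Complex.I / 3)) q)
    (h4 : aeval Complex.I V = aeval Complex.I q)
    (h5 : aeval (Complex.exp (Real.pi * Complex.I / 3)) V =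
          aeval (Complex.exp (Real.pi * Complex.I / 3)) q) :
    ((X : ℤ[X])^8 - 2*X^7 + 3*X^6 - 4*X^5 + 4*X^4 - 4*X^3 + 3*X^2 - 2*X + 1) ∣ (V - q) := by
  set φ := Int.castRingHom ℂ with hφ
  set P : ℤ[X] := V - q with hP
  set Q : ℂ[X] := P.map φ with hQdef
  -- roots of P as complex dvd
  have haev : ∀ z : ℂ, aeval z P = 0 → (X - C z) ∣ Q := by
    intro z hz
    refine Polynomial.dvd_iff_isRoot.mpr ?_
    simpa [Polynomial.IsRoot, hQdef, Polynomial.eval_map, Polynomial.aeval_def, hφ] using hz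
  have hconj : ∀ z : ℂ, aeval z P = 0 → aeval ((starRingEnd ℂ) z) P = 0 := by
    intro z hz
    have h := congrArg (starRingEnd ℂ) hz
    rw [Polynomial.aeval_def, Polynomial.hom_eval₂] at h
    have hcomp : (starRingEnd ℂ).comp (algebraMap ℤ ℂ) = algebraMap ℤ ℂ := by
      ext1
      simp
    rw [hcomp] at h
    simpa [Polynomial.aeval_def] using h
  -- the three nonreal root hypotheses
  have hz3 : aeval (Complex.exp (2 * Real.pi * Complex.I / 3)) P = 0 := by
    simp [hP, h3]
  have hz4 : aeval Complex.I P = 0 := by simp [hP, h4]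
  have hz6 : aeval (Complex.exp (Real.pi * Complex.I / 3)) P = 0 := by simp [hP, h5]
  -- rewrite exponentials
  have e3 : (2 * (Real.pi:ℂ) * Complex.I / 3) = ((2 * Real.pi / 3 : ℝ) : ℂ) * Complex.I := by
    push_cast; ring
  have e6 : ((Real.pi:ℂ) * Complex.I / 3) = ((Real.pi / 3 : ℝ) : ℂ) * Complex.I := by
    push_cast; ring
  rw [e3] at hz3
  rw [e6] at hz6
  set ζ : ℂ := Complex.exp (((2 * Real.pi / 3 : ℝ) : ℂ) * Complex.I) with hζdef
  set ω : ℂ := Complex.exp (((Real.pi / 3 : ℝ) : ℂ) * Complex.I) with hωdef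
  -- facts about ζ
  have hζre : ζ.re = Real.cos (2 * Real.pi / 3) := Complex.exp_ofReal_mul_I_re _
  have hζim : ζ.im = Real.sin (2 * Real.pi / 3) := Complex.exp_ofReal_mul_I_im _
  have hcos3 : Real.cos (2 * Real.pi / 3) = -(1/2) := by
    have : 2 * Real.pi / 3 = Real.pi - Real.pi / 3 := by ring
    rw [this, Real.cos_pi_sub, Real.cos_pi_div_three]
  have hsin3 : 0 < Real.sin (2 * Real.pi / 3) := by
    apply Real.sin_pos_of_pos_of_lt_pi <;> nlinarith [Real.pi_pos]
  have hζs : ζ + (starRingEnd ℂ) ζ = -1 := by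
    rw [Complex.add_conj, hζre, hcos3]
    norm_num
  have hζp : ζ * (starRingEnd ℂ) ζ = 1 := by
    have hr : Real.cos (2 * Real.pi / 3) * Real.cos (2 * Real.pi / 3)
        + Real.sin (2 * Real.pi / 3) * Real.sin (2 * Real.pi / 3) = 1 := by
      nlinarith [Real.sin_sq_add_cos_sq (2 * Real.pi / 3)]
    rw [Complex.mul_conj, Complex.normSq_apply, hζre, hζim, hr]
    norm_num
  have hζne : ζ ≠ (starRingEnd ℂ) ζ := by
    intro h
    have h0 : ζ.im = 0 := Complex.conj_eq_iff_im.mp h.symm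
    rw [hζim] at h0
    exact hsin3.ne' h0
  -- facts about ω
  have hωre : ω.re = Real.cos (Real.pi / 3) := Complex.exp_ofReal_mul_I_re _
  have hωim : ω.im = Real.sin (Real.pi / 3) := Complex.exp_ofReal_mul_I_im _
  have hsin6 : 0 < Real.sin (Real.pi / 3) := by
    apply Real.sin_pos_of_pos_of_lt_pi <;> nlinarith [Real.pi_pos]
  have hωs : ω + (starRingEnd ℂ) ω = 1 := by
    rw [Complex.add_conj, hωre, Real.cos_pi_div_three]
    norm_num
  have hωp : ω * (starRingEnd ℂ) ω = 1 := by
    have hr : Real.cos (Real.pi / 3) * Real.cos (Real.pi / 3)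
        + Real.sin (Real.pi / 3) * Real.sin (Real.pi / 3) = 1 := by
      nlinarith [Real.sin_sq_add_cos_sq (Real.pi / 3)]
    rw [Complex.mul_conj, Complex.normSq_apply, hωre, hωim, hr]
    norm_num
  have hωne : ω ≠ (starRingEnd ℂ) ω := by
    intro h
    have h0 : ω.im = 0 := Complex.conj_eq_iff_im.mp h.symm
    rw [hωim] at h0
    exact hsin6.ne' h0
  -- quadratic factorization helper
  have quad : ∀ a b : ℂ, (X - C a) * (X - C b)
      = X^2 - C (a + b) * X + C (a * b) := by
    intro a b
    rw [C_add, C_mul]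
    ring
  -- divisibility by each factor
  have d3 : ((X:ℂ[X])^2 + X + 1) ∣ Q := by
    have h1 := haev ζ hz3
    have h2 := haev _ (hconj ζ hz3)
    have hcop : IsCoprime ((X:ℂ[X]) - C ζ) (X - C ((starRingEnd ℂ) ζ)) :=
      isCoprime_X_sub_C_of_isUnit_sub (sub_ne_zero_of_ne hζne).isUnit
    have := hcop.mul_dvd h1 h2
    rwa [quad, hζs, hζp, map_one, map_neg, map_one, show ((X:ℂ[X])^2 - -1 * X + 1) = X^2 + X + 1 from by ring] at this
  have d4 : ((X:ℂ[X])^2 + 1) ∣ Q := by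
    have h1 := haev Complex.I hz4
    have h2 := haev _ (hconj Complex.I hz4)
    have hne : Complex.I ≠ (starRingEnd ℂ) Complex.I := by
      rw [Complex.conj_I]
      intro h
      exact Complex.I_ne_zero (by linear_combination h / 2)
    have hcop : IsCoprime ((X:ℂ[X]) - C Complex.I) (X - C ((starRingEnd ℂ) Complex.I)) :=
      isCoprime_X_sub_C_of_isUnit_sub (sub_ne_zero_of_ne hne).isUnit
    have := hcop.mul_dvd h1 h2
    rwa [quad, Complex.conj_I, show Complex.I + -Complex.I = 0 from by ring,
      show Complex.I * -Complex.I = 1 from by rw [mul_neg, Complex.I_mul_I, neg_neg],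
      map_zero, map_one, show ((X:ℂ[X])^2 - 0 * X + 1) = X^2 + 1 from by ring] at this
  have d6 : ((X:ℂ[X])^2 - X + 1) ∣ Q := by
    have h1 := haev ω hz6
    have h2 := haev _ (hconj ω hz6)
    have hcop : IsCoprime ((X:ℂ[X]) - C ω) (X - C ((starRingEnd ℂ) ω)) :=
      isCoprime_X_sub_C_of_isUnit_sub (sub_ne_zero_of_ne hωne).isUnit
    have := hcop.mul_dvd h1 h2
    rwa [quad, hωs, hωp, map_one, show ((X:ℂ[X])^2 - 1 * X + 1) = X^2 - X + 1 from by ring] at this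
  -- (X-1)^2 divides Q
  have d1 : ((X:ℂ[X]) - 1)^2 ∣ Q := by
    have hq1 : Q.eval 1 = 0 := by
      rw [hQdef, Polynomial.eval_one_map]
      simp [hP, h1]
    have hq1' : (derivative Q).eval 1 = 0 := by
      rw [hQdef, Polynomial.derivative_map, Polynomial.eval_one_map]
      simp [hP, h2]
    obtain ⟨R, hR⟩ := (Polynomial.dvd_iff_isRoot (p := Q) (a := 1)).mpr hq1
    have hR1 : R.eval 1 = 0 := by
      have := congrArg (fun p => (derivative p).eval 1) hR
      simp only [derivative_mul, derivative_sub, derivative_X, derivative_C,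
        Polynomial.eval_add, Polynomial.eval_mul, Polynomial.eval_sub,
        Polynomial.eval_X, Polynomial.eval_C, Polynomial.eval_one, sub_zero, one_mul] at this
      rw [hq1'] at this
      simpa using this.symm
    obtain ⟨S, hS⟩ := (Polynomial.dvd_iff_isRoot (p := R) (a := 1)).mpr hR1
    refine ⟨S, ?_⟩
    rw [hR, hS]
    simp only [Polynomial.C_1]
    ring
  -- coprimality between grouped factors
  have c13 : IsCoprime ((X:ℂ[X]) - 1) (X^2 + X + 1) :=
    bez (u := -(X + 2)) (v := 1) (w := C 3) (by rw [map_ofNat]; ring)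
      (Polynomial.isUnit_C.mpr (by norm_num))
  have c14 : IsCoprime ((X:ℂ[X]) - 1) (X^2 + 1) :=
    bez (u := -(X + 1)) (v := 1) (w := C 2) (by rw [map_ofNat]; ring)
      (Polynomial.isUnit_C.mpr (by norm_num))
  have c16 : IsCoprime ((X:ℂ[X]) - 1) (X^2 - X + 1) :=
    ⟨-X, 1, by ring⟩
  have c34 : IsCoprime ((X:ℂ[X])^2 + X + 1) (X^2 + 1) :=
    ⟨-X, X + 1, by ring⟩
  have c36 : IsCoprime ((X:ℂ[X])^2 + X + 1) (X^2 - X + 1) :=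
    bez (u := -X + 1) (v := X + 1) (w := C 2) (by rw [map_ofNat]; ring)
      (Polynomial.isUnit_C.mpr (by norm_num))
  have c46 : IsCoprime ((X:ℂ[X])^2 + 1) (X^2 - X + 1) :=
    ⟨-(X - 1), X, by ring⟩
  -- combine
  have dA : ((X:ℂ[X]) - 1)^2 * (X^2 + X + 1) ∣ Q := (c13.pow_left).mul_dvd d1 d3
  have cA : IsCoprime (((X:ℂ[X]) - 1)^2 * (X^2 + X + 1)) (X^2 + 1) :=
    IsCoprime.mul_left (c14.pow_left) c34
  have dB : ((X:ℂ[X]) - 1)^2 * (X^2 + X + 1) * (X^2 + 1) ∣ Q := cA.mul_dvd dA d4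
  have cB : IsCoprime (((X:ℂ[X]) - 1)^2 * (X^2 + X + 1) * (X^2 + 1)) (X^2 - X + 1) :=
    IsCoprime.mul_left (IsCoprime.mul_left (c16.pow_left) c36) c46
  have dC : ((X:ℂ[X]) - 1)^2 * (X^2 + X + 1) * (X^2 + 1) * (X^2 - X + 1) ∣ Q := cB.mul_dvd dB d6
  -- conclude over ℤ
  have hfact : ((X : ℤ[X])^8 - 2*X^7 + 3*X^6 - 4*X^5 + 4*X^4 - 4*X^3 + 3*X^2 - 2*X + 1)
      = (X - 1)^2 * (X^2 + X + 1) * (X^2 + 1) * (X^2 - X + 1) := by ring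
  rw [hfact]
  have hmon : (((X:ℤ[X]) - 1)^2 * (X^2 + X + 1) * (X^2 + 1) * (X^2 - X + 1)).Monic := by
    monicity!
  rw [← Polynomial.map_dvd_map φ Int.cast_injective hmon]
  simp only [Polynomial.map_mul, Polynomial.map_pow, Polynomial.map_sub, Polynomial.map_add,
    Polynomial.map_one, Polynomial.map_X, Polynomial.map_ofNat]
  exact dC
end

section
/- Let h(t) = (t³ − 1)(t − 1)(t² + 1) ∈ ℤ[t] and V₃₁(t) = −t⁴ + t³ + t. For every integer n, the polynomial p(t) = V₃₁(t) + n·h(t)·(2t − 1) satisfies: p(1) = 1, p′(1) = 0 (formal derivative at 1), p(ζ₃) = 1, p(i) = −1, and p(ζ₆) = (1 + 2n)·√3·i, where evaluations are in ℂ. -/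
open Polynomial

theorem stmt_5 (n : ℤ) :
    let h : ℤ[X] := (X^3 - 1) * (X - 1) * (X^2 + 1)
    let V31 : ℤ[X] := -X^4 + X^3 + X
    let p : ℤ[X] := V31 + C n * h * (2 * X - 1)
    p.eval 1 = 1 ∧
    (derivative p).eval 1 = 0 ∧
    aeval (Complex.exp (2 * Real.pi * Complex.I / 3)) p = 1 ∧
    aeval Complex.I p = -1 ∧
    aeval (Complex.exp (Real.pi * Complex.I / 3)) p =
      (1 + 2 * (n : ℂ)) * (Real.sqrt 3 : ℂ) * Complex.I := by
  intro h V31 p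
  refine ⟨?_, ?_, ?_, ?_, ?_⟩
  · simp [p, V31, h]
  · simp [p, V31, h]
  · set z : ℂ := Complex.exp (2 * Real.pi * Complex.I / 3) with hzdef
    have hz3 : z ^ 3 = 1 := by
      rw [hzdef, ← Complex.exp_nat_mul]
      rw [show ((3 : ℕ) : ℂ) * (2 * Real.pi * Complex.I / 3) = 2 * Real.pi * Complex.I by
        push_cast; ring]
      exact Complex.exp_two_pi_mul_I
    simp only [p, V31, h, map_add, map_mul, map_sub, map_neg, map_pow, map_ofNat,
      aeval_X, aeval_C, map_one, aeval_natCast, map_intCast, algebraMap_int_eq, eq_intCast]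
    linear_combination (1 - z + (n : ℂ) * (z - 1) * (z ^ 2 + 1) * (2 * z - 1)) * hz3
  · simp only [p, V31, h, map_add, map_mul, map_sub, map_neg, map_pow, map_ofNat,
      aeval_X, aeval_C, map_one, aeval_natCast, map_intCast, algebraMap_int_eq, eq_intCast]
    linear_combination (-Complex.I ^ 2 + Complex.I + 1 +
      (n : ℂ) * (Complex.I ^ 3 - 1) * (Complex.I - 1) * (2 * Complex.I - 1)) * Complex.I_sq
  · set z : ℂ := Complex.exp (Real.pi * Complex.I / 3) with hzdef
    set s : ℂ := (Real.sqrt 3 : ℂ) with hsdef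
    have hs : s ^ 2 = 3 := by
      rw [hsdef, ← Complex.ofReal_pow, Real.sq_sqrt (by norm_num : (3:ℝ) ≥ 0)]
      norm_num
    have hz : z = 1 / 2 + s / 2 * Complex.I := by
      rw [hzdef, show (Real.pi * Complex.I / 3 : ℂ) = ((Real.pi / 3 : ℝ) : ℂ) * Complex.I by
        push_cast; ring, Complex.exp_mul_I, ← Complex.ofReal_cos, ← Complex.ofReal_sin,
        Real.cos_pi_div_three, Real.sin_pi_div_three]
      push_cast
      ring
    have hz2 : z ^ 2 = z - 1 := by
      rw [hz]
      linear_combination (Complex.I ^ 2 / 4) * hs + (3 / 4) * Complex.I_sq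
    have hz3 : z ^ 3 = -1 := by
      linear_combination (z + 1) * hz2
    have h2z : 2 * z - 1 = s * Complex.I := by rw [hz]; ring
    simp only [p, V31, h, map_add, map_mul, map_sub, map_neg, map_pow, map_ofNat,
      aeval_X, aeval_C, map_one, aeval_natCast, map_intCast, algebraMap_int_eq, eq_intCast]
    linear_combination ((1 - z) + (n : ℂ) * (2 * z - 1) * (z - 1) * (z ^ 2 + 1)) * hz3 +
      (-2 * (n : ℂ) * z * (2 * z - 1)) * hz2 + (1 + 2 * (n : ℂ)) * h2z
end

section
/- Let h(t) = (t³ − 1)(t − 1)(t² + 1) ∈ ℤ[t] and V₈₂₁(t) = t⁷ − 2t⁶ + 2t⁵ − 3t⁴ + 3t³ − 2t² + 2t. For every integer n, the polynomial p(t) = V₈₂₁(t) + n·h(t)·(2t − 1) satisfies: p(1) = 1, p′(1) = 0 (formal derivative at 1), p(ζ₃) = 1, p(i) = 1, and p(ζ₆) = (1 + 2n)·√3·i, where evaluations are in ℂ. -/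
open Polynomial

/-!
The perturbation `h * (2t - 1)` is divisible by `(t - 1)^2`, by `t^3 - 1` and by `t^2 + 1`, so
adding multiples of it changes neither the value and derivative at `1` nor the values at `ζ₃`
and `i`; and `V₈₂₁` takes the value `1` at all three points. The sixth root of unity `ζ₆` is
a root of `t^2 - t + 1`, and modulo that polynomial `V₈₂₁ ≡ 2t - 1` and `h ≡ 2`, while
`2 ζ₆ - 1 = √3 i`.
-/

namespace Jones821

noncomputable def V821 : ℤ[X] := X^7 - 2*X^6 + 2*X^5 - 3*X^4 + 3*X^3 - 2*X^2 + 2*X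

noncomputable def h : ℤ[X] := (X^3 - 1) * (X - 1) * (X^2 + 1)

section Evaluation

variable {R : Type*} [CommRing R] {x : R}

lemma aeval_V821_of_pow_three_eq_one (hx : x ^ 3 = 1) : aeval x V821 = 1 := by
  simp only [V821, map_add, map_sub, map_mul, map_pow, map_ofNat, aeval_X]
  linear_combination (x ^ 4 - 2 * x ^ 3 + 2 * x ^ 2 - 2 * x + 1) * hx

lemma aeval_V821_of_sq_eq_neg_one (hx : x ^ 2 = -1) : aeval x V821 = 1 := by
  simp only [V821, map_add, map_sub, map_mul, map_pow, map_ofNat, aeval_X]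
  linear_combination (x ^ 5 - 2 * x ^ 4 + x ^ 3 - x ^ 2 + 2 * x - 1) * hx

lemma aeval_V821_of_sq_eq_sub_one (hx : x ^ 2 = x - 1) : aeval x V821 = 2 * x - 1 := by
  simp only [V821, map_add, map_sub, map_mul, map_pow, map_ofNat, aeval_X]
  linear_combination (x ^ 5 - x ^ 4 - 2 * x ^ 2 + x + 1) * hx

lemma aeval_h_of_pow_three_eq_one (hx : x ^ 3 = 1) : aeval x h = 0 := by
  simp only [h, map_add, map_sub, map_mul, map_pow, map_one, aeval_X, hx, sub_self, zero_mul]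

lemma aeval_h_of_sq_eq_neg_one (hx : x ^ 2 = -1) : aeval x h = 0 := by
  simp only [h, map_add, map_sub, map_mul, map_pow, map_one, aeval_X, hx, neg_add_cancel,
    mul_zero]

lemma aeval_h_of_sq_eq_sub_one (hx : x ^ 2 = x - 1) : aeval x h = 2 := by
  simp only [h, map_add, map_sub, map_mul, map_pow, map_one, aeval_X]
  linear_combination (x ^ 4 - 2 * x - 1) * hx

lemma aeval_add_C_mul_h_mul (n : ℤ) (q : ℤ[X]) :
    aeval x (V821 + C n * h * q) = aeval x V821 + n * aeval x h * aeval x q := by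
  simp only [map_add, map_mul, eq_intCast, map_intCast]

end Evaluation

lemma eval_one_V821 : V821.eval 1 = 1 := by
  simp [V821]

lemma eval_one_derivative_V821 : (derivative V821).eval 1 = 0 := by
  simp [V821]

lemma eval_one_h : h.eval 1 = 0 := by
  simp [h]

lemma eval_one_derivative_h : (derivative h).eval 1 = 0 := by
  simp [h]

lemma eval_one_add_C_mul_h_mul (n : ℤ) (q : ℤ[X]) : (V821 + C n * h * q).eval 1 = 1 := by
  simp [eval_one_V821, eval_one_h]

lemma eval_one_derivative_add_C_mul_h_mul (n : ℤ) (q : ℤ[X]) :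
    (derivative (V821 + C n * h * q)).eval 1 = 0 := by
  simp [eval_one_derivative_V821, eval_one_h, eval_one_derivative_h]

end Jones821

namespace Complex

lemma two_mul_exp_pi_div_three_mul_I_sub_one :
    2 * exp (Real.pi * I / 3) - 1 = (Real.sqrt 3 : ℂ) * I := by
  rw [show (Real.pi * I / 3 : ℂ) = ((Real.pi / 3 : ℝ) : ℂ) * I by push_cast; ring,
    exp_mul_I, ← ofReal_cos, ← ofReal_sin, Real.cos_pi_div_three, Real.sin_pi_div_three]
  push_cast
  ring

lemma exp_pi_div_three_mul_I_sq :
    exp (Real.pi * I / 3) ^ 2 = exp (Real.pi * I / 3) - 1 := by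
  have h3 : (Real.sqrt 3 : ℂ) ^ 2 = 3 := by
    norm_cast
    exact Real.sq_sqrt (by norm_num)
  linear_combination (exp (Real.pi * I / 3) - 1/2 + Real.sqrt 3 / 2 * I) / 2 *
    two_mul_exp_pi_div_three_mul_I_sub_one + h3 * I ^ 2 / 4 + 3 / 4 * I_sq

lemma exp_two_pi_div_three_mul_I_pow_three : exp (2 * Real.pi * I / 3) ^ 3 = 1 := by
  exact_mod_cast (isPrimitiveRoot_exp 3 (by norm_num)).pow_eq_one

end Complex

theorem stmt_7 (n : ℤ) :
    let h : ℤ[X] := (X^3 - 1) * (X - 1) * (X^2 + 1)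
    let V821 : ℤ[X] := X^7 - 2*X^6 + 2*X^5 - 3*X^4 + 3*X^3 - 2*X^2 + 2*X
    let p : ℤ[X] := V821 + C n * h * (2 * X - 1)
    p.eval 1 = 1 ∧
    (derivative p).eval 1 = 0 ∧
    aeval (Complex.exp (2 * Real.pi * Complex.I / 3)) p = 1 ∧
    aeval Complex.I p = 1 ∧
    aeval (Complex.exp (Real.pi * Complex.I / 3)) p =
      (1 + 2 * (n : ℂ)) * (Real.sqrt 3 : ℂ) * Complex.I := by
  open Jones821 Complex in
  intro _ _ p
  have hp : p = V821 + C n * h * (2 * X - 1) := rfl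
  have hζ₃ := exp_two_pi_div_three_mul_I_pow_three
  have hζ₆ := exp_pi_div_three_mul_I_sq
  refine ⟨eval_one_add_C_mul_h_mul n _, eval_one_derivative_add_C_mul_h_mul n _, ?_, ?_, ?_⟩
  · rw [hp, aeval_add_C_mul_h_mul, aeval_V821_of_pow_three_eq_one hζ₃,
      aeval_h_of_pow_three_eq_one hζ₃, mul_zero, zero_mul, add_zero]
  · rw [hp, aeval_add_C_mul_h_mul, aeval_V821_of_sq_eq_neg_one I_sq,
      aeval_h_of_sq_eq_neg_one I_sq, mul_zero, zero_mul, add_zero]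
  · rw [hp, aeval_add_C_mul_h_mul, aeval_V821_of_sq_eq_sub_one hζ₆,
      aeval_h_of_sq_eq_sub_one hζ₆]
    simp only [map_sub, map_mul, map_ofNat, aeval_X, map_one,
      two_mul_exp_pi_div_three_mul_I_sub_one]
    ring
end

section
/- For every ε ∈ {1, −1}, every δ ∈ {1, −1} and every m ∈ ℕ, there exists a polynomial p ∈ ℤ[t] of degree at most seven, belonging to one of the four families (i) p = 1 + n·h, (ii) p = V₃₁ + n·h·(2t − 1), (iii) p = V₅₁ + n·h, (iv) p = V₈₂₁ + n·h·(2t − 1) for some n ∈ ℤ, such that p(1) = 1, p′(1) = 0 (formal derivative at 1), p(ζ₃) = 1, p(i) = ε, and p(ζ₆) = δ·(i√3)^m (evaluations in ℂ). -/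
open Polynomial

section Stmt10Aux

private lemma aux_hw (u : ℂ) (hu : u^2 = -3) :
    (((-1+u)/2)^3-1)*(((-1+u)/2)-1)*(((-1+u)/2)^2+1) = 0 := by
  linear_combination ((45/64 : ℂ) + (-3/4 : ℂ) * u + (13/32 : ℂ) * u^2 + (-1/8 : ℂ) * u^3
    + (1/64 : ℂ) * u^4) * hu

private lemma aux_hz (u : ℂ) (hu : u^2 = -3) :
    (((1+u)/2)^3-1)*(((1+u)/2)-1)*(((1+u)/2)^2+1) = 2 := by
  linear_combination ((-31/64 : ℂ) + (-3/16 : ℂ) * u + (3/32 : ℂ) * u^2 + (1/16 : ℂ) * u^3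
    + (1/64 : ℂ) * u^4) * hu

private lemma aux_V31w (u : ℂ) (hu : u^2 = -3) :
    -((-1+u)/2)^4+((-1+u)/2)^3+((-1+u)/2) = 1 := by
  linear_combination ((-9/16 : ℂ) + (3/8 : ℂ) * u + (-1/16 : ℂ) * u^2) * hu

private lemma aux_V31z (u : ℂ) (hu : u^2 = -3) :
    -((1+u)/2)^4+((1+u)/2)^3+((1+u)/2) = u := by
  linear_combination ((3/16 : ℂ) + (-1/8 : ℂ) * u + (-1/16 : ℂ) * u^2) * hu

private lemma aux_V51w (u : ℂ) (hu : u^2 = -3) :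
    -((-1+u)/2)^7+((-1+u)/2)^6-((-1+u)/2)^5+((-1+u)/2)^4+((-1+u)/2)^2 = 1 := by
  linear_combination ((-27/128 : ℂ) + (-45/128 : ℂ) * u + (33/64 : ℂ) * u^2 + (-17/64 : ℂ) * u^3
    + (9/128 : ℂ) * u^4 + (-1/128 : ℂ) * u^5) * hu

private lemma aux_V51z (u : ℂ) (hu : u^2 = -3) :
    -((1+u)/2)^7+((1+u)/2)^6-((1+u)/2)^5+((1+u)/2)^4+((1+u)/2)^2 = -1 := by
  linear_combination ((55/128 : ℂ) + (27/128 : ℂ) * u + (-1/64 : ℂ) * u^2 + (-5/64 : ℂ) * u^3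
    + (-5/128 : ℂ) * u^4 + (-1/128 : ℂ) * u^5) * hu

private lemma aux_V821w (u : ℂ) (hu : u^2 = -3) :
    ((-1+u)/2)^7-2*((-1+u)/2)^6+2*((-1+u)/2)^5-3*((-1+u)/2)^4+3*((-1+u)/2)^3
      -2*((-1+u)/2)^2+2*((-1+u)/2) = 1 := by
  linear_combination ((-135/128 : ℂ) + (189/128 : ℂ) * u + (-63/64 : ℂ) * u^2 + (25/64 : ℂ) * u^3
    + (-11/128 : ℂ) * u^4 + (1/128 : ℂ) * u^5) * hu

private lemma aux_V821z (u : ℂ) (hu : u^2 = -3) :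
    ((1+u)/2)^7-2*((1+u)/2)^6+2*((1+u)/2)^5-3*((1+u)/2)^4+3*((1+u)/2)^3
      -2*((1+u)/2)^2+2*((1+u)/2) = u := by
  linear_combination ((31/128 : ℂ) + (-19/128 : ℂ) * u + (-9/64 : ℂ) * u^2 + (1/64 : ℂ) * u^3
    + (3/128 : ℂ) * u^4 + (1/128 : ℂ) * u^5) * hu

private lemma aux_hI : (Complex.I^3-1)*(Complex.I-1)*(Complex.I^2+1) = 0 := by
  linear_combination ((Complex.I^3-1)*(Complex.I-1)) * Complex.I_sq

private lemma aux_V31I : -Complex.I^4+Complex.I^3+Complex.I = -1 := by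
  linear_combination (-Complex.I^2 + Complex.I + 1) * Complex.I_sq

private lemma aux_V51I :
    -Complex.I^7+Complex.I^6-Complex.I^5+Complex.I^4+Complex.I^2 = -1 := by
  linear_combination (1 + Complex.I^4 - Complex.I^5) * Complex.I_sq

private lemma aux_V821I :
    Complex.I^7-2*Complex.I^6+2*Complex.I^5-3*Complex.I^4+3*Complex.I^3
      -2*Complex.I^2+2*Complex.I = 1 := by
  linear_combination (-1 + 2*Complex.I - Complex.I^2 + Complex.I^3 - 2*Complex.I^4
    + Complex.I^5) * Complex.I_sq

private lemma aux_expw :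
    Complex.exp (2 * Real.pi * Complex.I / 3) = (-1 + Complex.I * (Real.sqrt 3 : ℂ))/2 := by
  have h1 : (2 * (Real.pi:ℂ) * Complex.I / 3) = ((Real.pi - Real.pi/3 : ℝ) : ℂ) * Complex.I := by
    push_cast; ring
  rw [h1, Complex.exp_mul_I, ← Complex.ofReal_cos, ← Complex.ofReal_sin,
    Real.cos_pi_sub, Real.sin_pi_sub, Real.cos_pi_div_three, Real.sin_pi_div_three]
  push_cast; ring

private lemma aux_expz :
    Complex.exp (Real.pi * Complex.I / 3) = (1 + Complex.I * (Real.sqrt 3 : ℂ))/2 := by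
  have h1 : ((Real.pi:ℂ) * Complex.I / 3) = ((Real.pi/3 : ℝ) : ℂ) * Complex.I := by
    push_cast; ring
  rw [h1, Complex.exp_mul_I, ← Complex.ofReal_cos, ← Complex.ofReal_sin,
    Real.cos_pi_div_three, Real.sin_pi_div_three]
  push_cast; ring

private lemma aux_aeval_h (x : ℂ) :
    aeval x ((X^3 - 1) * (X - 1) * (X^2 + 1) : ℤ[X]) = (x^3-1)*(x-1)*(x^2+1) := by
  simp

private lemma aux_aeval_lin (x : ℂ) : aeval x (2 * X - 1 : ℤ[X]) = 2*x - 1 := by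
  simp [map_ofNat]

private lemma aux_aeval_V31 (x : ℂ) :
    aeval x (-X^4 + X^3 + X : ℤ[X]) = -x^4 + x^3 + x := by simp

private lemma aux_aeval_V51 (x : ℂ) :
    aeval x (-X^7 + X^6 - X^5 + X^4 + X^2 : ℤ[X]) = -x^7 + x^6 - x^5 + x^4 + x^2 := by simp

private lemma aux_aeval_V821 (x : ℂ) :
    aeval x (X^7 - 2*X^6 + 2*X^5 - 3*X^4 + 3*X^3 - 2*X^2 + 2*X : ℤ[X])
      = x^7 - 2*x^6 + 2*x^5 - 3*x^4 + 3*x^3 - 2*x^2 + 2*x := by simp [map_ofNat]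

private lemma aux_h_eval1 : ((X^3 - 1) * (X - 1) * (X^2 + 1) : ℤ[X]).eval 1 = 0 := by simp

private lemma aux_h_deriv1 :
    (derivative ((X^3 - 1) * (X - 1) * (X^2 + 1) : ℤ[X])).eval 1 = 0 := by
  simp [derivative_mul]

private lemma aux_hl_eval1 : (((X^3 - 1) * (X - 1) * (X^2 + 1)) * (2*X - 1) : ℤ[X]).eval 1 = 0 := by
  simp

private lemma aux_hl_deriv1 :
    (derivative (((X^3 - 1) * (X - 1) * (X^2 + 1)) * (2*X - 1) : ℤ[X])).eval 1 = 0 := by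
  simp [derivative_mul]


private lemma aux_comb (x : ℂ) (q r : ℤ[X]) (n : ℤ) (a b : ℂ)
    (hq : aeval x q = a) (hr : aeval x r = b) :
    aeval x (q + C n * r) = a + n * b := by
  simp [hq, hr]

private lemma aux_comb2 (x : ℂ) (q r t : ℤ[X]) (n : ℤ) (a b c' : ℂ)
    (hq : aeval x q = a) (hr : aeval x r = b) (ht : aeval x t = c') :
    aeval x (q + C n * (r * t)) = a + n * (b * c') := by
  simp [hq, hr, ht, mul_assoc]

private lemma aux_eval1_comb (q r : ℤ[X]) (n : ℤ) (hq : q.eval 1 = 1) (hr : r.eval 1 = 0) :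
    (q + C n * r).eval 1 = 1 := by simp [hq, hr]

private lemma aux_deriv1_comb (q r : ℤ[X]) (n : ℤ) (hq : (derivative q).eval 1 = 0)
    (hr0 : r.eval 1 = 0) (hr : (derivative r).eval 1 = 0) :
    (derivative (q + C n * r)).eval 1 = 0 := by
  simp [derivative_add, derivative_mul, hq, hr, hr0]

private lemma aux_V31_eval1 : (-X^4 + X^3 + X : ℤ[X]).eval 1 = 1 := by simp
private lemma aux_V31_deriv1 : (derivative (-X^4 + X^3 + X : ℤ[X])).eval 1 = 0 := by
  simp [derivative_pow]
private lemma aux_V51_eval1 : (-X^7 + X^6 - X^5 + X^4 + X^2 : ℤ[X]).eval 1 = 1 := by simp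
private lemma aux_V51_deriv1 : (derivative (-X^7 + X^6 - X^5 + X^4 + X^2 : ℤ[X])).eval 1 = 0 := by
  simp [derivative_pow]
private lemma aux_V821_eval1 :
    (X^7 - 2*X^6 + 2*X^5 - 3*X^4 + 3*X^3 - 2*X^2 + 2*X : ℤ[X]).eval 1 = 1 := by
  simp
private lemma aux_V821_deriv1 :
    (derivative (X^7 - 2*X^6 + 2*X^5 - 3*X^4 + 3*X^3 - 2*X^2 + 2*X : ℤ[X])).eval 1 = 0 := by
  simp [derivative_pow]

private lemma aux_deg1 (n : ℤ) :
    (1 + C n * ((X^3 - 1) * (X - 1) * (X^2 + 1)) : ℤ[X]).degree ≤ 7 := by compute_degree!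
private lemma aux_deg2 (n : ℤ) :
    ((-X^4 + X^3 + X) + C n * (((X^3 - 1) * (X - 1) * (X^2 + 1)) * (2*X - 1)) : ℤ[X]).degree ≤ 7 := by
  compute_degree!
private lemma aux_deg3 (n : ℤ) :
    ((-X^7 + X^6 - X^5 + X^4 + X^2) + C n * ((X^3 - 1) * (X - 1) * (X^2 + 1)) : ℤ[X]).degree ≤ 7 := by
  compute_degree!
private lemma aux_deg4 (n : ℤ) :
    ((X^7 - 2*X^6 + 2*X^5 - 3*X^4 + 3*X^3 - 2*X^2 + 2*X)
      + C n * (((X^3 - 1) * (X - 1) * (X^2 + 1)) * (2*X - 1)) : ℤ[X]).degree ≤ 7 := by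
  compute_degree!

end Stmt10Aux

theorem stmt_10 (ε δ : ℂ) (hε : ε = 1 ∨ ε = -1) (hδ : δ = 1 ∨ δ = -1) (m : ℕ) :
    let h : ℤ[X] := (X^3 - 1) * (X - 1) * (X^2 + 1)
    let V31 : ℤ[X] := -X^4 + X^3 + X
    let V51 : ℤ[X] := -X^7 + X^6 - X^5 + X^4 + X^2
    let V821 : ℤ[X] := X^7 - 2*X^6 + 2*X^5 - 3*X^4 + 3*X^3 - 2*X^2 + 2*X
    ∃ p : ℤ[X], p.degree ≤ 7 ∧
      (∃ n : ℤ,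
        p = 1 + C n * h ∨
        p = V31 + C n * h * (2 * X - 1) ∨
        p = V51 + C n * h ∨
        p = V821 + C n * h * (2 * X - 1)) ∧
      p.eval 1 = 1 ∧
      (derivative p).eval 1 = 0 ∧
      aeval (Complex.exp (2 * Real.pi * Complex.I / 3)) p = 1 ∧
      aeval Complex.I p = ε ∧
      aeval (Complex.exp (Real.pi * Complex.I / 3)) p =
        δ * (Complex.I * (Real.sqrt 3 : ℂ)) ^ m := by
  intro h V31 V51 V821
  set u : ℂ := Complex.I * (Real.sqrt 3 : ℂ) with hu_def
  have hs : ((Real.sqrt 3 : ℂ))^2 = 3 := by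
    rw [← Complex.ofReal_pow, Real.sq_sqrt (by norm_num : (3:ℝ) ≥ 0)]; norm_num
  have hu : u^2 = -3 := by rw [hu_def, mul_pow, Complex.I_sq, hs]; ring
  have hω : Complex.exp (2 * Real.pi * Complex.I / 3) = (-1 + u)/2 := aux_expw
  have hζ : Complex.exp (Real.pi * Complex.I / 3) = (1 + u)/2 := aux_expz
  -- evaluations of h
  have ehω : aeval (Complex.exp (2 * Real.pi * Complex.I / 3)) h = 0 := by
    rw [show h = (X^3 - 1) * (X - 1) * (X^2 + 1) from rfl, aux_aeval_h, hω]
    exact aux_hw u hu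
  have ehI : aeval Complex.I h = 0 := by
    rw [show h = (X^3 - 1) * (X - 1) * (X^2 + 1) from rfl, aux_aeval_h]
    exact aux_hI
  have ehζ : aeval (Complex.exp (Real.pi * Complex.I / 3)) h = 2 := by
    rw [show h = (X^3 - 1) * (X - 1) * (X^2 + 1) from rfl, aux_aeval_h, hζ]
    exact aux_hz u hu
  have elζ : aeval (Complex.exp (Real.pi * Complex.I / 3)) (2 * X - 1 : ℤ[X]) = u := by
    rw [aux_aeval_lin, hζ]; ring
  obtain ⟨d, hdδ, hd⟩ : ∃ d : ℤ, (d:ℂ) = δ ∧ Odd d := by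
    rcases hδ with h' | h'
    · exact ⟨1, by simp [h'], odd_one⟩
    · exact ⟨-1, by simp [h'], ⟨-1, by ring⟩⟩
  set ω : ℂ := Complex.exp (2 * Real.pi * Complex.I / 3) with hω_def
  set ζ : ℂ := Complex.exp (Real.pi * Complex.I / 3) with hζ_def
  have elω : aeval ω (2 * X - 1 : ℤ[X]) = 2 * ω - 1 := aux_aeval_lin ω
  have elI : aeval Complex.I (2 * X - 1 : ℤ[X]) = 2 * Complex.I - 1 := aux_aeval_lin _
  rcases Nat.even_or_odd m with ⟨k, hk⟩ | ⟨k, hk⟩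
  · -- m even
    obtain ⟨c, hc⟩ := hd.mul (Odd.pow (by decide : Odd (-3:ℤ)) : Odd ((-3:ℤ)^k))
    have hc' : (d:ℂ) * (-3:ℂ)^k = 2*(c:ℂ) + 1 := by exact_mod_cast hc
    have hum : u^m = ((-3:ℂ))^k := by rw [hk, ← two_mul, pow_mul, hu]
    rcases hε with hε1 | hε1
    · -- family (i)
      refine ⟨1 + C c * h, aux_deg1 c, ⟨c, Or.inl rfl⟩,
        aux_eval1_comb _ _ _ (by simp) aux_h_eval1,
        aux_deriv1_comb _ _ _ (by simp) aux_h_eval1 aux_h_deriv1, ?_, ?_, ?_⟩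
      · rw [aux_comb ω 1 h c 1 0 (map_one _) ehω]; ring
      · rw [aux_comb Complex.I 1 h c 1 0 (map_one _) ehI, hε1]; ring
      · rw [aux_comb ζ 1 h c 1 2 (map_one _) ehζ, hum, ← hdδ]
        linear_combination -hc'
    · -- family (iii)
      refine ⟨(-X^7 + X^6 - X^5 + X^4 + X^2) + C (c+1) * h, aux_deg3 (c+1),
        ⟨c+1, Or.inr (Or.inr (Or.inl rfl))⟩,
        aux_eval1_comb _ _ _ aux_V51_eval1 aux_h_eval1,
        aux_deriv1_comb _ _ _ aux_V51_deriv1 aux_h_eval1 aux_h_deriv1, ?_, ?_, ?_⟩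
      · rw [aux_comb ω _ h (c+1) 1 0 (by rw [aux_aeval_V51, hω]; exact aux_V51w u hu) ehω]; ring
      · rw [aux_comb Complex.I _ h (c+1) (-1) 0 (by rw [aux_aeval_V51]; exact aux_V51I) ehI, hε1]
        ring
      · rw [aux_comb ζ _ h (c+1) (-1) 2 (by rw [aux_aeval_V51, hζ]; exact aux_V51z u hu) ehζ,
          hum, ← hdδ]
        push_cast
        linear_combination -hc'
  · -- m odd
    obtain ⟨c, hc⟩ := hd.mul (Odd.pow (by decide : Odd (-3:ℤ)) : Odd ((-3:ℤ)^k))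
    have hc' : (d:ℂ) * (-3:ℂ)^k = 2*(c:ℂ) + 1 := by exact_mod_cast hc
    have hum : u^m = ((-3:ℂ))^k * u := by rw [hk, pow_succ, pow_mul, hu]
    rcases hε with hε1 | hε1
    · -- family (iv)
      refine ⟨(X^7 - 2*X^6 + 2*X^5 - 3*X^4 + 3*X^3 - 2*X^2 + 2*X) + C c * (h * (2*X - 1)),
        aux_deg4 c, ⟨c, Or.inr (Or.inr (Or.inr (by rw [← mul_assoc])))⟩,
        aux_eval1_comb _ _ _ aux_V821_eval1 aux_hl_eval1,
        aux_deriv1_comb _ _ _ aux_V821_deriv1 aux_hl_eval1 aux_hl_deriv1, ?_, ?_, ?_⟩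
      · rw [aux_comb2 ω _ h _ c 1 0 (2*ω-1)
          (by rw [aux_aeval_V821, hω]; exact aux_V821w u hu) ehω elω]; ring
      · rw [aux_comb2 Complex.I _ h _ c 1 0 (2*Complex.I-1)
          (by rw [aux_aeval_V821]; exact aux_V821I) ehI elI, hε1]; ring
      · rw [aux_comb2 ζ _ h _ c u 2 u
          (by rw [aux_aeval_V821, hζ]; exact aux_V821z u hu) ehζ elζ, hum, ← hdδ]
        linear_combination (-u) * hc'
    · -- family (ii)
      refine ⟨(-X^4 + X^3 + X) + C c * (h * (2*X - 1)),
        aux_deg2 c, ⟨c, Or.inr (Or.inl (by rw [← mul_assoc]))⟩,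
        aux_eval1_comb _ _ _ aux_V31_eval1 aux_hl_eval1,
        aux_deriv1_comb _ _ _ aux_V31_deriv1 aux_hl_eval1 aux_hl_deriv1, ?_, ?_, ?_⟩
      · rw [aux_comb2 ω _ h _ c 1 0 (2*ω-1)
          (by rw [aux_aeval_V31, hω]; exact aux_V31w u hu) ehω elω]; ring
      · rw [aux_comb2 Complex.I _ h _ c (-1) 0 (2*Complex.I-1)
          (by rw [aux_aeval_V31]; exact aux_V31I) ehI elI, hε1]; ring
      · rw [aux_comb2 ζ _ h _ c u 2 u
          (by rw [aux_aeval_V31, hζ]; exact aux_V31z u hu) ehζ elζ, hum, ← hdδ]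
        linear_combination (-u) * hc'
end
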